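/- arXiv:2405.11266 — 3 statements merged into one kernel-verified Lean document; each statement's English description precedes it below -/
import Mathlib

section
/- The following are equivalent: (i) S_KKT has a Lipschitz continuous single-valued localization around p̄ for (x̄,λ̄); (ii) T_KKT has a Lipschitz continuous single-valued localization around (ū,v̄) for (x̄,λ̄). -/
open Function Set
open scoped InnerProductSpace

noncomputable section

namespace NEPStability

/-! ## Stability notions for set-valued mappings -/

section SetValued

variable {A B : Type*} [NormedAddCommGroup A] [NormedAddCommGroup B]

/-- The Aubin property of a set-valued mapping `Φ` at `a` for `b`. -/
def HasAubinProperty (Φ : A → Set B) (a : A) (b : B) : Prop :=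
  b ∈ Φ a ∧
  (∃ ε : ℝ, 0 < ε ∧ IsClosed ({q : A × B | q.2 ∈ Φ q.1} ∩ Metric.closedBall (a, b) ε)) ∧
  ∃ κ : ℝ, 0 ≤ κ ∧ ∃ U : Set A, ∃ V : Set B,
    IsOpen U ∧ IsOpen V ∧ a ∈ U ∧ b ∈ V ∧
    ∀ a₁ ∈ U, ∀ a₂ ∈ U, ∀ z ∈ Φ a₂ ∩ V, ∃ z' ∈ Φ a₁, ‖z - z'‖ ≤ κ * ‖a₂ - a₁‖

/-- `Φ` has a Lipschitz continuous single-valued localization around `a` for `b`. -/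
def HasLipschitzLocalization (Φ : A → Set B) (a : A) (b : B) : Prop :=
  b ∈ Φ a ∧
  ∃ U : Set A, ∃ V : Set B, IsOpen U ∧ IsOpen V ∧ a ∈ U ∧ b ∈ V ∧
    ∃ σ : A → B, (∃ K : NNReal, LipschitzOnWith K σ U) ∧ (∀ q ∈ U, σ q ∈ V) ∧
      ∀ q ∈ U, ∀ z ∈ V, (z ∈ Φ q ↔ z = σ q)

/-- `Φ` is isolated calm at `a` for `b`. -/
def IsolatedCalmAt (Φ : A → Set B) (a : A) (b : B) : Prop :=
  b ∈ Φ a ∧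
  ∃ κ : ℝ, 0 ≤ κ ∧ ∃ U : Set A, ∃ V : Set B,
    IsOpen U ∧ IsOpen V ∧ a ∈ U ∧ b ∈ V ∧
    ∀ q ∈ U, ∀ z ∈ Φ q ∩ V, ‖z - b‖ ≤ κ * ‖q - a‖

/-- `Φ` is robust isolated calm at `a` for `b`. -/
def RobustIsolatedCalmAt (Φ : A → Set B) (a : A) (b : B) : Prop :=
  b ∈ Φ a ∧
  ∃ κ : ℝ, 0 ≤ κ ∧ ∃ U : Set A, ∃ V : Set B,
    IsOpen U ∧ IsOpen V ∧ a ∈ U ∧ b ∈ V ∧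
    (∀ q ∈ U, ∀ z ∈ Φ q ∩ V, ‖z - b‖ ≤ κ * ‖q - a‖) ∧
    ∀ q ∈ U, (Φ q ∩ V).Nonempty

end SetValued

section C1

variable {A B : Type*} [NormedAddCommGroup A] [NormedSpace ℝ A]
  [NormedAddCommGroup B] [NormedSpace ℝ B]

/-- `Φ` has a continuously differentiable single-valued localization around `a` for `b`. -/
def HasC1Localization (Φ : A → Set B) (a : A) (b : B) : Prop :=
  b ∈ Φ a ∧
  ∃ U : Set A, ∃ V : Set B, IsOpen U ∧ IsOpen V ∧ a ∈ U ∧ b ∈ V ∧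
    ∃ σ : A → B, ContDiffOn ℝ 1 σ U ∧ (∀ q ∈ U, σ q ∈ V) ∧
      ∀ q ∈ U, ∀ z ∈ V, (z ∈ Φ q ↔ z = σ q)

end C1

/-! ## The Nash equilibrium problem -/

/-- The data of an `N`-player Nash equilibrium problem with canonical perturbations:
player `k` has strategy space `ℝ^{n k}`, `m k` constraints of which the first `s k` are
equalities, and parameter space `ℝ^{d k}`; `f` are the objective functions and `g` the
constraint functions. -/
structure NEPData (N : ℕ) (n m d : Fin N → ℕ) where
  s : Fin N → ℕ
  f : ∀ k : Fin N, (∀ j, EuclideanSpace ℝ (Fin (n j))) → EuclideanSpace ℝ (Fin (d k)) → ℝ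
  g : ∀ k : Fin N, Fin (m k) → EuclideanSpace ℝ (Fin (n k)) → EuclideanSpace ℝ (Fin (d k)) → ℝ

/-- Inner product of two strategy profiles. -/
def pinner {N : ℕ} {n : Fin N → ℕ} (y z : ∀ j, EuclideanSpace ℝ (Fin (n j))) : ℝ :=
  ∑ k, ⟪y k, z k⟫_ℝ

/-- Polar cone of a set of strategy profiles. -/
def polarCone {N : ℕ} {n : Fin N → ℕ} (K : Set (∀ j, EuclideanSpace ℝ (Fin (n j)))) :
    Set (∀ j, EuclideanSpace ℝ (Fin (n j))) :=
  {z | ∀ y ∈ K, pinner z y ≤ 0}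

namespace NEPData

variable {N : ℕ} {n m d : Fin N → ℕ} (P : NEPData N n m d)

/-- The gradient `∇_{x^k} L^k(x,λ^k;w^k)` of player `k`'s Lagrangian with respect to
its own strategy. -/
def gradLag (k : Fin N) (x : ∀ j, EuclideanSpace ℝ (Fin (n j)))
    (lk : EuclideanSpace ℝ (Fin (m k))) (wk : EuclideanSpace ℝ (Fin (d k))) :
    EuclideanSpace ℝ (Fin (n k)) :=
  gradient (fun y : EuclideanSpace ℝ (Fin (n k)) =>
    P.f k (Function.update x k y) wk + ∑ i, lk i * P.g k i y wk) (x k)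

/-- The gradient `∇_{x^k} g^k_i(x^k;w^k)`. -/
def gradg (k : Fin N) (i : Fin (m k)) (xk : EuclideanSpace ℝ (Fin (n k)))
    (wk : EuclideanSpace ℝ (Fin (d k))) : EuclideanSpace ℝ (Fin (n k)) :=
  gradient (fun y => P.g k i y wk) xk

/-- The Hessian block `∇²_{x^k x^i} L^k(x,λ^k;w^k)`, as a continuous linear map from
player `i`'s space to player `k`'s space. -/
def hessLag (k i : Fin N) (x : ∀ j, EuclideanSpace ℝ (Fin (n j)))
    (lk : EuclideanSpace ℝ (Fin (m k))) (wk : EuclideanSpace ℝ (Fin (d k))) :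
    EuclideanSpace ℝ (Fin (n i)) →L[ℝ] EuclideanSpace ℝ (Fin (n k)) :=
  fderiv ℝ (fun y : EuclideanSpace ℝ (Fin (n i)) =>
    P.gradLag k (Function.update x i y) lk wk) (x i)

/-- The KKT solution mapping `S_KKT` of the NEP with canonical perturbations:
`p = (u,v,w)`. -/
def SKKT (p : (∀ k, EuclideanSpace ℝ (Fin (m k))) × (∀ j, EuclideanSpace ℝ (Fin (n j)))
      × (∀ k, EuclideanSpace ℝ (Fin (d k)))) :
    Set ((∀ j, EuclideanSpace ℝ (Fin (n j))) × (∀ k, EuclideanSpace ℝ (Fin (m k)))) :=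
  {xl | ∀ k,
    P.gradLag k xl.1 (xl.2 k) (p.2.2 k) = p.2.1 k ∧
    (∀ i : Fin (m k), (i : ℕ) < P.s k → P.g k i (xl.1 k) (p.2.2 k) = p.1 k i) ∧
    (∀ i : Fin (m k), P.s k ≤ (i : ℕ) →
      0 ≤ xl.2 k i ∧ P.g k i (xl.1 k) (p.2.2 k) ≤ p.1 k i ∧
      xl.2 k i * (P.g k i (xl.1 k) (p.2.2 k) - p.1 k i) = 0)}

/-- The KKT solution mapping `T_KKT` of the NEP with only tilt perturbations, the
parameter `w` being fixed at `wb`. -/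
def TKKT (wb : ∀ k, EuclideanSpace ℝ (Fin (d k)))
    (uv : (∀ k, EuclideanSpace ℝ (Fin (m k))) × (∀ j, EuclideanSpace ℝ (Fin (n j)))) :
    Set ((∀ j, EuclideanSpace ℝ (Fin (n j))) × (∀ k, EuclideanSpace ℝ (Fin (m k)))) :=
  P.SKKT (uv.1, uv.2, wb)

/-- The linearized KKT mapping `L_KKT` at the reference point `(pb, xb, lb)`. -/
def LKKT (pb : (∀ k, EuclideanSpace ℝ (Fin (m k))) × (∀ j, EuclideanSpace ℝ (Fin (n j)))
      × (∀ k, EuclideanSpace ℝ (Fin (d k))))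
    (xb : ∀ j, EuclideanSpace ℝ (Fin (n j))) (lb : ∀ k, EuclideanSpace ℝ (Fin (m k)))
    (uv : (∀ k, EuclideanSpace ℝ (Fin (m k))) × (∀ j, EuclideanSpace ℝ (Fin (n j)))) :
    Set ((∀ j, EuclideanSpace ℝ (Fin (n j))) × (∀ k, EuclideanSpace ℝ (Fin (m k)))) :=
  {xl | ∀ k,
    uv.2 k = P.gradLag k xb (lb k) (pb.2.2 k)
      + ∑ i, P.hessLag k i xb (lb k) (pb.2.2 k) (xl.1 i - xb i)
      + ∑ j, (xl.2 k j - lb k j) • P.gradg k j (xb k) (pb.2.2 k) ∧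
    (∀ i : Fin (m k), (i : ℕ) < P.s k →
      P.g k i (xb k) (pb.2.2 k) + ⟪P.gradg k i (xb k) (pb.2.2 k), xl.1 k - xb k⟫_ℝ
        = uv.1 k i) ∧
    (∀ i : Fin (m k), P.s k ≤ (i : ℕ) →
      0 ≤ xl.2 k i ∧
      P.g k i (xb k) (pb.2.2 k) + ⟪P.gradg k i (xb k) (pb.2.2 k), xl.1 k - xb k⟫_ℝ
        ≤ uv.1 k i ∧
      xl.2 k i * (P.g k i (xb k) (pb.2.2 k)
        + ⟪P.gradg k i (xb k) (pb.2.2 k), xl.1 k - xb k⟫_ℝ - uv.1 k i) = 0)}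

section Reference

variable (pb : (∀ k, EuclideanSpace ℝ (Fin (m k))) × (∀ j, EuclideanSpace ℝ (Fin (n j)))
    × (∀ k, EuclideanSpace ℝ (Fin (d k))))
  (xb : ∀ j, EuclideanSpace ℝ (Fin (n j))) (lb : ∀ k, EuclideanSpace ℝ (Fin (m k)))

/-- The index set `I^k_1` of equality and strongly active inequality constraints. -/
def idx1 (k : Fin N) : Set (Fin (m k)) :=
  {i | (i : ℕ) < P.s k ∨
    (P.s k ≤ (i : ℕ) ∧ 0 < lb k i ∧ P.g k i (xb k) (pb.2.2 k) = pb.1 k i)}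

/-- The index set `I^k_2` of weakly active inequality constraints. -/
def idx2 (k : Fin N) : Set (Fin (m k)) :=
  {i | P.s k ≤ (i : ℕ) ∧ lb k i = 0 ∧ P.g k i (xb k) (pb.2.2 k) = pb.1 k i}

/-- The index set `I^k_3` of inactive inequality constraints. -/
def idx3 (k : Fin N) : Set (Fin (m k)) :=
  {i | P.s k ≤ (i : ℕ) ∧ lb k i = 0 ∧ P.g k i (xb k) (pb.2.2 k) < pb.1 k i}

/-- The linear independence constraint qualification for player `k`. -/
def LICQ (k : Fin N) : Prop :=
  LinearIndependent ℝ
    (fun i : ↥(P.idx1 pb xb lb k ∪ P.idx2 pb xb lb k) => P.gradg k i.1 (xb k) (pb.2.2 k))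

/-- The strict Mangasarian–Fromovitz constraint qualification for player `k`. -/
def SMFCQ (k : Fin N) : Prop :=
  LinearIndependent ℝ (fun i : ↥(P.idx1 pb xb lb k) => P.gradg k i.1 (xb k) (pb.2.2 k)) ∧
  ∃ y : EuclideanSpace ℝ (Fin (n k)),
    (∀ i ∈ P.idx1 pb xb lb k, ⟪P.gradg k i (xb k) (pb.2.2 k), y⟫_ℝ = 0) ∧
    (∀ i ∈ P.idx2 pb xb lb k, ⟪P.gradg k i (xb k) (pb.2.2 k), y⟫_ℝ < 0)

/-- The strict complementary slackness condition for player `k`. -/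
def SCSC (k : Fin N) : Prop := P.idx2 pb xb lb k = ∅

/-- The cone `K(J_1,J_2)` associated with families of index sets `J_1, J_2`. -/
def Kcone (J1 J2 : ∀ k, Set (Fin (m k))) : Set (∀ j, EuclideanSpace ℝ (Fin (n j))) :=
  {y | ∀ k, (∀ i ∈ J1 k, ⟪P.gradg k i (xb k) (pb.2.2 k), y k⟫_ℝ = 0) ∧
            (∀ i ∈ J2 k, ⟪P.gradg k i (xb k) (pb.2.2 k), y k⟫_ℝ ≤ 0)}

/-- Membership in the index partition set `𝓘`. -/
def IsCriticalPartition (J1 J2 J3 : ∀ k, Set (Fin (m k))) : Prop :=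
  ∀ k, J1 k ∪ J2 k ∪ J3 k = Set.univ ∧
    Disjoint (J1 k) (J2 k) ∧ Disjoint (J1 k) (J3 k) ∧ Disjoint (J2 k) (J3 k) ∧
    P.idx1 pb xb lb k ⊆ J1 k ∧ J1 k ⊆ P.idx1 pb xb lb k ∪ P.idx2 pb xb lb k ∧
    P.idx3 pb xb lb k ⊆ J3 k ∧ J3 k ⊆ P.idx2 pb xb lb k ∪ P.idx3 pb xb lb k

/-- The subspace `M^k`, the null space of the gradients of player `k`'s strongly
active constraints. -/
def Mset (k : Fin N) : Set (EuclideanSpace ℝ (Fin (n k))) :=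
  {y | ∀ i ∈ P.idx1 pb xb lb k, ⟪P.gradg k i (xb k) (pb.2.2 k), y⟫_ℝ = 0}

/-- The critical cone of player `k`. -/
def critCone (k : Fin N) : Set (EuclideanSpace ℝ (Fin (n k))) :=
  {y | (∀ i ∈ P.idx1 pb xb lb k, ⟪P.gradg k i (xb k) (pb.2.2 k), y⟫_ℝ = 0) ∧
       (∀ i ∈ P.idx2 pb xb lb k, ⟪P.gradg k i (xb k) (pb.2.2 k), y⟫_ℝ ≤ 0)}

/-- The strong second-order sufficient condition for player `k`. -/
def SSOSC (k : Fin N) : Prop :=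
  ∀ y ∈ P.Mset pb xb lb k, y ≠ 0 → 0 < ⟪y, P.hessLag k k xb (lb k) (pb.2.2 k) y⟫_ℝ

/-- The second-order sufficient condition for player `k`. -/
def SOSC (k : Fin N) : Prop :=
  ∀ y ∈ P.critCone pb xb lb k, y ≠ 0 → 0 < ⟪y, P.hessLag k k xb (lb k) (pb.2.2 k) y⟫_ℝ

/-- The matrix `A_{ki} := ∇²_{x^k x^i}L^k + (∇²_{x^i x^k}L^i)ᵀ`. -/
def Amap (k i : Fin N) :
    EuclideanSpace ℝ (Fin (n i)) →L[ℝ] EuclideanSpace ℝ (Fin (n k)) :=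
  P.hessLag k i xb (lb k) (pb.2.2 k) + (P.hessLag i k xb (lb i) (pb.2.2 i)).adjoint

/-- `B` is a family of basis matrices: `B k` has `n k - |I^k_1|` columns forming a
basis of `M^k`. -/
def IsBasisFamily
    (B : ∀ k, EuclideanSpace ℝ (Fin (n k - (P.idx1 pb xb lb k).ncard)) →L[ℝ]
      EuclideanSpace ℝ (Fin (n k))) : Prop :=
  ∀ k, Function.Injective (B k) ∧ Set.range (B k) = P.Mset pb xb lb k

/-- Condition (α): the coupling condition on the Hessian blocks with parameters `α`
and basis matrices `B`. -/
def CondAlpha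
    (B : ∀ k, EuclideanSpace ℝ (Fin (n k - (P.idx1 pb xb lb k).ncard)) →L[ℝ]
      EuclideanSpace ℝ (Fin (n k)))
    (α : Fin N → Fin N → ℝ) : Prop :=
  ∀ i k : Fin N, i ≠ k → ∀ y ∈ P.Mset pb xb lb k, y ≠ 0 →
    0 < ⟪y, (P.hessLag k k xb (lb k) (pb.2.2 k)
      - (1 / (4 * α i k * α k i)) •
        ((P.Amap pb xb lb i k).adjoint.comp ((B i).comp
          ((Ring.inverse (((B i).adjoint).comp
            ((P.hessLag i i xb (lb i) (pb.2.2 i)).comp (B i)))).comp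
            (((B i).adjoint).comp (P.Amap pb xb lb i k)))))) y⟫_ℝ

/-- The I-property on `K(I_1,I_2)`. -/
def IProperty : Prop :=
  ∀ y ∈ P.Kcone pb xb (P.idx1 pb xb lb) (P.idx2 pb xb lb),
    (∀ k, ∑ i, ⟪y k, P.hessLag k i xb (lb k) (pb.2.2 k) (y i)⟫_ℝ = 0) → y = 0

/-- The P-property on `K(I_1,I_2)`. -/
def PProperty : Prop :=
  ∀ y ∈ P.Kcone pb xb (P.idx1 pb xb lb) (P.idx2 pb xb lb), y ≠ 0 →
    ∃ k, 0 < (∑ i ∈ Finset.univ.erase k,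
        ⟪y k, P.hessLag k i xb (lb k) (pb.2.2 k) (y i)⟫_ℝ)
      + (1 / 2) * ⟪y k, P.hessLag k k xb (lb k) (pb.2.2 k) (y k)⟫_ℝ

end Reference

/-- The feasible set of player `k` at the perturbation `(uk, wk)`. -/
def feasSet (k : Fin N) (uk : EuclideanSpace ℝ (Fin (m k)))
    (wk : EuclideanSpace ℝ (Fin (d k))) : Set (EuclideanSpace ℝ (Fin (n k))) :=
  {y | (∀ i : Fin (m k), (i : ℕ) < P.s k → P.g k i y wk = uk i) ∧
       (∀ i : Fin (m k), P.s k ≤ (i : ℕ) → P.g k i y wk ≤ uk i)}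

/-- `x` is a local Nash equilibrium of the NEP at the perturbation `p`. -/
def IsLocalNash (p : (∀ k, EuclideanSpace ℝ (Fin (m k))) × (∀ j, EuclideanSpace ℝ (Fin (n j)))
      × (∀ k, EuclideanSpace ℝ (Fin (d k))))
    (x : ∀ j, EuclideanSpace ℝ (Fin (n j))) : Prop :=
  ∀ k, x k ∈ P.feasSet k (p.1 k) (p.2.2 k) ∧
    ∃ ε : ℝ, 0 < ε ∧ ∀ y ∈ P.feasSet k (p.1 k) (p.2.2 k), ‖y - x k‖ < ε →
      P.f k x (p.2.2 k) - ⟪p.2.1 k, x k⟫_ℝ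
        ≤ P.f k (Function.update x k y) (p.2.2 k) - ⟪p.2.1 k, y⟫_ℝ

/-- `x` is a (global) Nash equilibrium of the NEP at the perturbation `p`. -/
def IsNash (p : (∀ k, EuclideanSpace ℝ (Fin (m k))) × (∀ j, EuclideanSpace ℝ (Fin (n j)))
      × (∀ k, EuclideanSpace ℝ (Fin (d k))))
    (x : ∀ j, EuclideanSpace ℝ (Fin (n j))) : Prop :=
  ∀ k, x k ∈ P.feasSet k (p.1 k) (p.2.2 k) ∧
    ∀ y ∈ P.feasSet k (p.1 k) (p.2.2 k),
      P.f k x (p.2.2 k) - ⟪p.2.1 k, x k⟫_ℝ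
        ≤ P.f k (Function.update x k y) (p.2.2 k) - ⟪p.2.1 k, y⟫_ℝ

/-- The convex assumptions on the NEP. -/
def ConvexAssumptions : Prop :=
  (∀ (k : Fin N) (x : ∀ j, EuclideanSpace ℝ (Fin (n j))) (w : EuclideanSpace ℝ (Fin (d k))),
    ConvexOn ℝ Set.univ (fun y : EuclideanSpace ℝ (Fin (n k)) =>
      P.f k (Function.update x k y) w)) ∧
  (∀ (k : Fin N) (i : Fin (m k)), (i : ℕ) < P.s k →
    ∀ w : EuclideanSpace ℝ (Fin (d k)),
      ∃ (l : EuclideanSpace ℝ (Fin (n k)) →L[ℝ] ℝ) (c : ℝ), ∀ y, P.g k i y w = l y + c) ∧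
  (∀ (k : Fin N) (i : Fin (m k)), P.s k ≤ (i : ℕ) →
    ∀ w : EuclideanSpace ℝ (Fin (d k)),
      ConvexOn ℝ Set.univ (fun y : EuclideanSpace ℝ (Fin (n k)) => P.g k i y w))

/-- Smoothness of the data: each `f^k` is `C²` jointly in `(x,w^k)` and each `g^k_i`
is `C²` jointly in `(x^k,w^k)`. -/
def IsC2Data : Prop :=
  (∀ k : Fin N, ContDiff ℝ 2 (fun q : (∀ j, EuclideanSpace ℝ (Fin (n j)))
      × EuclideanSpace ℝ (Fin (d k)) => P.f k q.1 q.2)) ∧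
  (∀ (k : Fin N) (i : Fin (m k)), ContDiff ℝ 2 (fun q : EuclideanSpace ℝ (Fin (n k))
      × EuclideanSpace ℝ (Fin (d k)) => P.g k i q.1 q.2))

end NEPData

end NEPStability

/-! Perturbing `w` can be traded for a tilt: `(x, λ)` solves the KKT system at `(u, v, w)` iff it
solves the system at `(u', v', w̄)` with `u' = u - g(x; w) + g(x; w̄)` and
`v' = v - ∇L(x, λ; w) + ∇L(x, λ; w̄)`. This tilt `F((x, λ), p)` is `C¹` and, since
`F(·, (ū, v̄, w̄)) ≡ (ū, v̄)`, its partial derivative in `(x, λ)` vanishes at the reference point.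
So if `σ` localizes `T_KKT`, then near `p̄` the solutions of `S_KKT(p)` are the fixed points of
the uniform contraction `z ↦ σ(F(z, p))`, which depend Lipschitz continuously on `p`.
The other implication is restriction to the slice `w = w̄`. -/

open Function Set Metric Filter Topology
open scoped NNReal

section FixedPoint

variable {Z P : Type*} [PseudoMetricSpace P] {Φ : P → Z → Z} {W : Set P} {z₀ : Z} {r : ℝ}
  {K L : ℝ≥0}

theorem exists_closedBall_prod_ball_subset [PseudoMetricSpace Z] {p₀ : P} (c : ℝ≥0)
    {s : Set (Z × P)} (hs : s ∈ 𝓝 (z₀, p₀)) :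
    ∃ r > (0 : ℝ), ∃ ρ > (0 : ℝ), c * ρ < r / 2 ∧ closedBall z₀ r ×ˢ ball p₀ ρ ⊆ s := by
  obtain ⟨δ, hδ, hball⟩ := Metric.mem_nhds_iff.1 hs
  obtain ⟨ρ, hρ, hcρ⟩ := exists_pos_mul_lt (half_pos (half_pos hδ)) c
  refine ⟨δ / 2, half_pos hδ, min ρ (δ / 2), lt_min hρ (half_pos hδ),
    (mul_le_mul_of_nonneg_left (min_le_left _ _) c.2).trans_lt hcρ, ?_⟩
  calc closedBall z₀ (δ / 2) ×ˢ ball p₀ (min ρ (δ / 2))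
      ⊆ closedBall z₀ (δ / 2) ×ˢ closedBall p₀ (δ / 2) :=
        prod_mono le_rfl <|
          ball_subset_closedBall.trans (closedBall_subset_closedBall (min_le_right _ _))
    _ = closedBall (z₀, p₀) (δ / 2) := closedBall_prod_same _ _ _
    _ ⊆ ball (z₀, p₀) δ := closedBall_subset_ball (half_lt_self hδ)
    _ ⊆ s := hball

theorem mapsTo_ball_of_lipschitzOnWith [PseudoMetricSpace Z] {p₀ p : P}
    (hcontr : LipschitzOnWith K (Φ p) (closedBall z₀ r))
    (hlip : LipschitzOnWith L (Φ · z₀) W) (hp₀ : p₀ ∈ W) (hp : p ∈ W) (hΦ₀ : Φ p₀ z₀ = z₀)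
    (h : K * r + L * dist p p₀ < r) : MapsTo (Φ p) (closedBall z₀ r) (ball z₀ r) := by
  intro z hz
  have hz₀ : z₀ ∈ closedBall z₀ r := mem_closedBall_self (dist_nonneg.trans hz)
  calc dist (Φ p z) z₀ ≤ dist (Φ p z) (Φ p z₀) + dist (Φ p z₀) z₀ := dist_triangle _ _ _
    _ ≤ K * r + L * dist p p₀ := by
        gcongr
        · exact (hcontr.dist_le_mul z hz z₀ hz₀).trans (by gcongr; exact hz)
        · simpa only [hΦ₀] using hlip.dist_le_mul p hp p₀ hp₀
    _ < r := h

theorem exists_lipschitzOnWith_fixedPoint [MetricSpace Z] [CompleteSpace Z] (hr : 0 ≤ r)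
    (hK : K < 1)
    (hmaps : ∀ p ∈ W, MapsTo (Φ p) (closedBall z₀ r) (ball z₀ r))
    (hcontr : ∀ p ∈ W, LipschitzOnWith K (Φ p) (closedBall z₀ r))
    (hlip : ∀ z ∈ closedBall z₀ r, LipschitzOnWith L (Φ · z) W) :
    ∃ σ : P → Z, LipschitzOnWith (L / (1 - K)) σ W ∧
      ∀ p ∈ W, σ p ∈ ball z₀ r ∧ ∀ z ∈ closedBall z₀ r, (Φ p z = z ↔ z = σ p) := by
  classical
  have : Nonempty (closedBall z₀ r) := ⟨⟨z₀, mem_closedBall_self hr⟩⟩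
  have : CompleteSpace (closedBall z₀ r) := isClosed_closedBall.completeSpace_coe
  have hmaps' p (hp : p ∈ W) := (hmaps p hp).mono_right ball_subset_closedBall
  have hf p (hp : p ∈ W) : ContractingWith K ((hmaps' p hp).restrict) :=
    ⟨hK, (hcontr p hp).mapsToRestrict (hmaps' p hp)⟩
  let σ p : Z := if hp : p ∈ W then (hf p hp).fixedPoint else z₀
  have hσ p (hp : p ∈ W) : σ p = (hf p hp).fixedPoint := dif_pos hp
  refine ⟨σ, LipschitzOnWith.of_dist_le_mul fun p hp p' hp' => ?_, fun p hp => ?_⟩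
  · rw [hσ p hp, hσ p' hp', NNReal.coe_div, NNReal.coe_sub hK.le, NNReal.coe_one,
      div_mul_eq_mul_div]
    exact (hf p hp).fixedPoint_lipschitz_in_map (hf p' hp') fun z =>
      (hlip z z.2).dist_le_mul p hp p' hp'
  · have hfix : Φ p (σ p) = σ p := by
      rw [hσ p hp]
      exact congrArg Subtype.val (hf p hp).fixedPoint_isFixedPt
    refine ⟨hfix ▸ hmaps p hp (hσ p hp ▸ ((hf p hp).fixedPoint).2),
      fun z hz => ⟨fun hz' => ?_, ?_⟩⟩
    · rw [hσ p hp]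
      exact congrArg Subtype.val ((hf p hp).fixedPoint_unique (x := ⟨z, hz⟩) (Subtype.ext hz'))
    · rintro rfl
      exact hfix

end FixedPoint

section PartialDerivative

variable {𝕜 Z P Q : Type*} [NontriviallyNormedField 𝕜]
  [NormedAddCommGroup Z] [NormedSpace 𝕜 Z] [NormedAddCommGroup P] [NormedSpace 𝕜 P]
  [NormedAddCommGroup Q] [NormedSpace 𝕜 Q] {F : Z × P → Q} {D : Z × P →L[𝕜] Q}
  {z₀ : Z} {p₀ : P}

theorem HasFDerivAt.comp_inl_eq_zero (hF : HasFDerivAt F D (z₀, p₀))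
    (hconst : ∀ z, F (z, p₀) = F (z₀, p₀)) : D.comp (.inl 𝕜 Z P) = 0 := by
  refine (hF.comp z₀ (hasFDerivAt_prodMk_left z₀ p₀)).unique ?_
  simpa only [comp_def, hconst] using hasFDerivAt_const (F (z₀, p₀)) z₀

theorem HasStrictFDerivAt.exists_lipschitzOnWith_slice (hF : HasStrictFDerivAt F D (z₀, p₀))
    (hD : D.comp (.inl 𝕜 Z P) = 0) {ε : ℝ≥0} (hε : 0 < ε) :
    ∃ s ∈ 𝓝 (z₀, p₀), ∀ p, LipschitzOnWith ε (fun z => F (z, p)) {z | (z, p) ∈ s} := by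
  obtain ⟨U, hUo, hU₀, hU⟩ := exists_nhds_square (hF.isLittleO.def (NNReal.coe_pos.2 hε))
  refine ⟨U, hUo.mem_nhds hU₀, fun p => lipschitzOnWith_iff_norm_sub_le.2 fun z₁ h₁ z₂ h₂ => ?_⟩
  have hinl : ((z₁, p) - (z₂, p) : Z × P) = ContinuousLinearMap.inl 𝕜 Z P (z₁ - z₂) := by simp
  have := hU (mk_mem_prod h₁ h₂)
  rw [mem_ofPred_eq, hinl, ← D.comp_apply, hD] at this
  simpa using this

end PartialDerivative

namespace NEPStability

section Localization

variable {𝕜 Z P Q : Type*} [NontriviallyNormedField 𝕜]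
  [NormedAddCommGroup Z] [NormedSpace 𝕜 Z] [NormedAddCommGroup P] [NormedSpace 𝕜 P]
  [NormedAddCommGroup Q] [NormedSpace 𝕜 Q]

theorem HasLipschitzLocalization.comp_lipschitzWith {Φ : P → Set Z} {j : Q → P} {q : Q} {z : Z}
    {K : ℝ≥0} (h : HasLipschitzLocalization Φ (j q) z) (hj : LipschitzWith K j) :
    HasLipschitzLocalization (Φ ∘ j) q z := by
  obtain ⟨hz, U, V, hU, hV, hqU, hzV, σ, ⟨Kσ, hσ⟩, hσV, hgr⟩ := h
  exact ⟨hz, j ⁻¹' U, V, hU.preimage hj.continuous, hV, hqU, hzV, σ ∘ j,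
    ⟨Kσ * K, hσ.comp hj.lipschitzOnWith fun _ h => h⟩, fun _ h => hσV _ h,
    fun _ h => hgr _ h⟩

theorem HasLipschitzLocalization.of_mem_iff_mem_comp [CompleteSpace Z] {S : P → Set Z}
    {T : Q → Set Z} {F : Z × P → Q} {D : Z × P →L[𝕜] Q} {z₀ : Z} {p₀ : P}
    (hF : HasStrictFDerivAt F D (z₀, p₀)) (hD : D.comp (.inl 𝕜 Z P) = 0)
    (hST : ∀ z p, z ∈ S p ↔ z ∈ T (F (z, p)))
    (hT : HasLipschitzLocalization T (F (z₀, p₀)) z₀) :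
    HasLipschitzLocalization S p₀ z₀ := by
  obtain ⟨hz₀, U₀, V₀, hU₀, hV₀, hq₀, hz₀V, σ₀, ⟨K, hσ₀⟩, -, hgr⟩ := hT
  -- `K * ε < 1 / 2` makes `z ↦ σ₀ (F (z, p))` contract by `1 / 2` near `z₀`, and
  -- `K * C * ρ < r / 2` keeps `σ₀ (F (z₀, p))` within `r / 2` of `z₀`: the closed `r`-ball
  -- is mapped into the open one.
  obtain ⟨ε, hε, hKε⟩ := exists_pos_mul_lt (half_pos one_pos) K
  obtain ⟨s₁, hs₁, hslice⟩ := hF.exists_lipschitzOnWith_slice hD hε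
  obtain ⟨C, s₂, hs₂, hC⟩ := hF.exists_lipschitzOnWith
  obtain ⟨r, hr, ρ, hρ, hKCρ, hbox⟩ := exists_closedBall_prod_ball_subset (K * C) <|
    inter_mem (inter_mem hs₁ hs₂) <| inter_mem
      (hF.continuousAt.preimage_mem_nhds (hU₀.mem_nhds hq₀))
      (continuousAt_fst.preimage_mem_nhds (hV₀.mem_nhds hz₀V))
  have hp₀ : p₀ ∈ ball p₀ ρ := mem_ball_self hρ
  set Φ : P → Z → Z := fun p z => σ₀ (F (z, p))
  have hΦ₀ : Φ p₀ z₀ = z₀ := ((hgr _ hq₀ z₀ hz₀V).1 hz₀).symm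
  have hcontr : ∀ p ∈ ball p₀ ρ, LipschitzOnWith (K * ε) (Φ p) (closedBall z₀ r) :=
    fun p hp => hσ₀.comp ((hslice p).mono fun z hz => (hbox ⟨hz, hp⟩).1.1)
      fun z hz => (hbox ⟨hz, hp⟩).2.1
  have hlip : ∀ z ∈ closedBall z₀ r, LipschitzOnWith (K * C) (Φ · z) (ball p₀ ρ) := by
    intro z hz
    have := hσ₀.comp ((hC.comp (LipschitzWith.prodMk_left z).lipschitzOnWith
      fun p hp => (hbox ⟨hz, hp⟩).1.2)) fun p hp => (hbox ⟨hz, hp⟩).2.1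
    rwa [mul_one] at this
  have hmaps : ∀ p ∈ ball p₀ ρ, MapsTo (Φ p) (closedBall z₀ r) (ball z₀ r) := by
    intro p hp
    refine mapsTo_ball_of_lipschitzOnWith (hcontr p hp)
      (hlip z₀ (mem_closedBall_self hr.le)) hp₀ hp hΦ₀ ?_
    have hKCp : (K * C : ℝ≥0) * dist p p₀ < r / 2 :=
      (mul_le_mul_of_nonneg_left (mem_ball.1 hp).le (by positivity)).trans_lt hKCρ
    have hKεr : (K * ε : ℝ≥0) * r < 1 / 2 * r := by gcongr; exact_mod_cast hKε
    linarith
  obtain ⟨σ, hσlip, hσ⟩ := exists_lipschitzOnWith_fixedPoint hr.le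
    (hKε.trans (by norm_num)) hmaps hcontr hlip
  refine ⟨(hST _ _).2 hz₀, ball p₀ ρ, ball z₀ r, isOpen_ball, isOpen_ball, hp₀,
    mem_ball_self hr, σ, ⟨_, hσlip⟩, fun p hp => (hσ p hp).1, fun p hp z hz => ?_⟩
  have hzp := hbox (mk_mem_prod (ball_subset_closedBall hz) hp)
  rw [hST, hgr _ hzp.2.1 z hzp.2.2, eq_comm]
  exact (hσ p hp).2 z (ball_subset_closedBall hz)

end Localization

end NEPStability

section Smoothness

variable {𝕜 E ι : Type*} [NontriviallyNormedField 𝕜] [NormedAddCommGroup E] [NormedSpace 𝕜 E]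
  [Fintype ι] {F' : ι → Type*} [∀ i, NormedAddCommGroup (F' i)] [∀ i, NormedSpace 𝕜 (F' i)]
  {n : WithTop ℕ∞}

@[fun_prop]
theorem contDiff_apply_pi (i : ι) : ContDiff 𝕜 n fun f : ∀ i, F' i => f i :=
  contDiff_pi.1 contDiff_id i

@[fun_prop]
theorem ContDiff.update [DecidableEq ι] {k : ι} {f : E → ∀ i, F' i} {g : E → F' k}
    (hf : ContDiff 𝕜 n f) (hg : ContDiff 𝕜 n g) :
    ContDiff 𝕜 n fun x => update (f x) k (g x) := by
  refine contDiff_pi.2 fun j => ?_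
  rcases eq_or_ne j k with rfl | h
  · simpa using hg
  · simpa [update_of_ne h] using contDiff_pi.1 hf j

end Smoothness

namespace NEPStability.NEPData

variable {N : ℕ} {n m d : Fin N → ℕ} (P : NEPData N n m d)

theorem contDiff_gradLag (hC2 : P.IsC2Data) (k : Fin N) :
    ContDiff ℝ 1 fun a : (∀ j, EuclideanSpace ℝ (Fin (n j)))
        × EuclideanSpace ℝ (Fin (m k)) × EuclideanSpace ℝ (Fin (d k)) =>
      P.gradLag k a.1 a.2.1 a.2.2 := by
  have hf := hC2.1 k
  have hg := hC2.2 k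
  have hLag : ContDiff ℝ 2 (uncurry fun (a : (∀ j, EuclideanSpace ℝ (Fin (n j)))
      × EuclideanSpace ℝ (Fin (m k)) × EuclideanSpace ℝ (Fin (d k)))
      (y : EuclideanSpace ℝ (Fin (n k))) =>
      P.f k (update a.1 k y) a.2.2 + ∑ i, a.2.1 i * P.g k i y a.2.2) := by
    fun_prop
  exact (InnerProductSpace.toDual ℝ _).symm.contDiff.comp
    (hLag.fderiv (by fun_prop) (by norm_num))

def constraintVec (k : Fin N) (xk : EuclideanSpace ℝ (Fin (n k)))
    (wk : EuclideanSpace ℝ (Fin (d k))) : EuclideanSpace ℝ (Fin (m k)) :=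
  WithLp.toLp 2 fun i => P.g k i xk wk

theorem contDiff_constraintVec (hC2 : P.IsC2Data) (k : Fin N) :
    ContDiff ℝ 2 fun q : EuclideanSpace ℝ (Fin (n k)) × EuclideanSpace ℝ (Fin (d k)) =>
      P.constraintVec k q.1 q.2 :=
  PiLp.contDiff_toLp.comp (contDiff_pi.2 fun i => hC2.2 k i)

def tiltParam (wb : ∀ k, EuclideanSpace ℝ (Fin (d k)))
    (q : ((∀ j, EuclideanSpace ℝ (Fin (n j))) × (∀ k, EuclideanSpace ℝ (Fin (m k))))
      × (∀ k, EuclideanSpace ℝ (Fin (m k))) × (∀ j, EuclideanSpace ℝ (Fin (n j)))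
      × (∀ k, EuclideanSpace ℝ (Fin (d k)))) :
    (∀ k, EuclideanSpace ℝ (Fin (m k))) × (∀ j, EuclideanSpace ℝ (Fin (n j))) :=
  (fun k => q.2.1 k - P.constraintVec k (q.1.1 k) (q.2.2.2 k) + P.constraintVec k (q.1.1 k) (wb k),
   fun k => q.2.2.1 k - P.gradLag k q.1.1 (q.1.2 k) (q.2.2.2 k)
      + P.gradLag k q.1.1 (q.1.2 k) (wb k))

theorem tiltParam_self
    (z : (∀ j, EuclideanSpace ℝ (Fin (n j))) × (∀ k, EuclideanSpace ℝ (Fin (m k))))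
    (p : (∀ k, EuclideanSpace ℝ (Fin (m k))) × (∀ j, EuclideanSpace ℝ (Fin (n j)))
      × (∀ k, EuclideanSpace ℝ (Fin (d k)))) :
    P.tiltParam p.2.2 (z, p) = (p.1, p.2.1) := by
  simp [tiltParam]

theorem mem_SKKT_iff_mem_TKKT_tiltParam (wb : ∀ k, EuclideanSpace ℝ (Fin (d k)))
    (z : (∀ j, EuclideanSpace ℝ (Fin (n j))) × (∀ k, EuclideanSpace ℝ (Fin (m k))))
    (p : (∀ k, EuclideanSpace ℝ (Fin (m k))) × (∀ j, EuclideanSpace ℝ (Fin (n j)))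
      × (∀ k, EuclideanSpace ℝ (Fin (d k)))) :
    z ∈ P.SKKT p ↔ z ∈ P.TKKT wb (P.tiltParam wb (z, p)) := by
  simp [SKKT, TKKT, tiltParam, constraintVec, sub_eq_zero,
    eq_comm (a := P.gradLag _ _ _ (wb _)), eq_comm (a := P.g _ _ _ (wb _)),
    eq_comm (a := p.2.1 _), eq_comm (a := (p.1 _).ofLp _)]

theorem contDiff_tiltParam (hC2 : P.IsC2Data) (wb : ∀ k, EuclideanSpace ℝ (Fin (d k))) :
    ContDiff ℝ 1 (P.tiltParam wb) := by
  have hg (k : Fin N) := (P.contDiff_constraintVec hC2 k).of_le one_le_two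
  have hL (k : Fin N) := P.contDiff_gradLag hC2 k
  unfold tiltParam
  fun_prop

end NEPStability.NEPData

open NEPStability

theorem stmt4_general {N : ℕ} {n m d : Fin N → ℕ} (P : NEPData N n m d)
    (hC2 : P.IsC2Data)
    (pb : (∀ k, EuclideanSpace ℝ (Fin (m k))) × (∀ j, EuclideanSpace ℝ (Fin (n j)))
      × (∀ k, EuclideanSpace ℝ (Fin (d k))))
    (xb : ∀ j, EuclideanSpace ℝ (Fin (n j))) (lb : ∀ k, EuclideanSpace ℝ (Fin (m k))) :
    HasLipschitzLocalization P.SKKT pb (xb, lb) ↔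
      HasLipschitzLocalization (P.TKKT pb.2.2) (pb.1, pb.2.1) (xb, lb) := by
  have hembed : LipschitzWith 1 fun uv : (∀ k, EuclideanSpace ℝ (Fin (m k)))
      × (∀ j, EuclideanSpace ℝ (Fin (n j))) => (uv.1, uv.2, pb.2.2) :=
    (LipschitzWith.prod_fst.prodMk
      ((LipschitzWith.prodMk_right _).comp LipschitzWith.prod_snd)).weaken (by simp)
  refine ⟨fun h => h.comp_lipschitzWith hembed, fun h => ?_⟩
  have hF := (P.contDiff_tiltParam hC2 pb.2.2).contDiffAt.hasStrictFDerivAt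
    (x := ((xb, lb), pb)) one_ne_zero
  refine .of_mem_iff_mem_comp hF
    (hF.hasFDerivAt.comp_inl_eq_zero fun z => by rw [P.tiltParam_self, P.tiltParam_self])
    (P.mem_SKKT_iff_mem_TKKT_tiltParam pb.2.2) ?_
  rwa [P.tiltParam_self]

/-- Corollary 3.1: strong regularity of `S_KKT` is equivalent to strong regularity of `T_KKT`. -/
theorem stmt4 {N : ℕ} {n m d : Fin N → ℕ} (P : NEPData N n m d)
    (hC2 : P.IsC2Data)
    (pb : (∀ k, EuclideanSpace ℝ (Fin (m k))) × (∀ j, EuclideanSpace ℝ (Fin (n j)))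
      × (∀ k, EuclideanSpace ℝ (Fin (d k))))
    (xb : ∀ j, EuclideanSpace ℝ (Fin (n j))) (lb : ∀ k, EuclideanSpace ℝ (Fin (m k)))
    (hsol : (xb, lb) ∈ P.SKKT pb) :
    HasLipschitzLocalization P.SKKT pb (xb, lb) ↔
      HasLipschitzLocalization (P.TKKT pb.2.2) (pb.1, pb.2.1) (xb, lb) :=
  stmt4_general P hC2 pb xb lb
end
end

section
/- Let N ≥ 1 and n_1,...,n_N be positive integers. For k,i ∈ {1,...,N} let Q_{ki} ∈ ℝ^{n_k × n_i} with each Q_{kk} symmetric, let M^k ⊆ ℝ^{n_k} be a nonzero linear subspace with basis matrix B^k, and set M = M^1 × ... × M^N. Suppose: (a) yᵀ Q_{kk} y > 0 for every 0 ≠ y ∈ M^k and every k; and (b) there exist parameters α_{i,j} > 0 (1 ≤ i,j ≤ N, j ≠ i) with Σ_{j≠i} α_{i,j} = 1 for each i, such that for every ordered pair of distinct indices (i,k) and every 0 ≠ y^k ∈ M^k, (y^k)ᵀ ( Q_{kk} − (1/(4 α_{i,k} α_{k,i})) A_{ik}ᵀ B^i ((B^i)ᵀ Q_{ii} B^i)^{−1}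 (B^i)ᵀ A_{ik} ) y^k > 0, where A_{ki} := Q_{ki} + Q_{ik}ᵀ. Then for every 0 ≠ y = (y^1,...,y^N) ∈ M, Σ_{k=1}^N Σ_{i=1}^N (y^k)ᵀ Q_{ki} y^i > 0. -/
/-!
Write `y i = B i (u i)` and `A = Q i k + (Q k i)†`. For `i ≠ k`, completing the square in `u i`
against the positive definite compressed block `G = (B i)† Q i i B i` bounds the pair form
`α i k ⟪y i, Q i i (y i)⟫ + ⟪y i, A (y k)⟫ + α k i ⟪y k, Q k k (y k)⟫` from below by `α k i`
times the quadratic form of condition (b) at `y k`; so it is nonnegative, and positive when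
`y k ≠ 0`. Since `∑_{j ≠ i} α i j = 1`, the pair forms over all ordered pairs add up to exactly
twice the full block form.
-/

open Finset ContinuousLinearMap
open scoped InnerProductSpace InnerProduct

section BlockSums

variable {ι R : Type*} [Fintype ι] [DecidableEq ι]

lemma sum_sum_erase_comm [AddCommMonoid R] (f : ι → ι → R) :
    ∑ i, ∑ k ∈ univ.erase i, f i k = ∑ k, ∑ i ∈ univ.erase k, f i k :=
  sum_comm' fun _ _ => by simp only [mem_univ, mem_erase, true_and, and_true, ne_comm]

lemma sum_sum_erase_pair_eq [CommSemiring R] (e α : ι → ι → R)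
    (hα : ∀ i, ∑ k ∈ univ.erase i, α i k = 1) :
    ∑ i, ∑ k ∈ univ.erase i, (α i k * e i i + (e i k + e k i) + α k i * e k k)
      = 2 * ∑ i, ∑ k, e i k := by
  have hdiag : ∀ i, ∑ k ∈ univ.erase i, α i k * e i i = e i i := fun i => by
    rw [← sum_mul, hα i, one_mul]
  have hsplit : ∀ i, ∑ k, e i k = e i i + ∑ k ∈ univ.erase i, e i k := fun i =>
    (add_sum_erase _ _ (mem_univ i)).symm
  simp only [sum_add_distrib]
  rw [sum_sum_erase_comm (fun i k => α k i * e k k), sum_sum_erase_comm (fun i k => e k i)]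
  simp only [hdiag, hsplit, sum_add_distrib]
  ring

lemma sum_sum_erase_pos [AddCommMonoid R] [PartialOrder R] [IsOrderedCancelAddMonoid R]
    {f : ι → ι → R} (hf : ∀ i k, i ≠ k → 0 ≤ f i k) {i₀ k₀ : ι} (h₀ : i₀ ≠ k₀)
    (hpos : 0 < f i₀ k₀) : 0 < ∑ i, ∑ k ∈ univ.erase i, f i k :=
  sum_pos' (fun i _ => sum_nonneg fun k hk => hf i k (mem_erase.1 hk).1.symm)
    ⟨i₀, mem_univ _, sum_pos' (fun k hk => hf i₀ k (mem_erase.1 hk).1.symm)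
      ⟨k₀, mem_erase.2 ⟨h₀.symm, mem_univ _⟩, hpos⟩⟩

end BlockSums

namespace ContinuousLinearMap

lemma isUnit_of_injective {𝕜 V : Type*} [NontriviallyNormedField 𝕜] [CompleteSpace 𝕜]
    [NormedAddCommGroup V] [NormedSpace 𝕜 V] [FiniteDimensional 𝕜 V] {G : V →L[𝕜] V}
    (hG : Function.Injective G) : IsUnit G :=
  have := FiniteDimensional.complete 𝕜 V
  isUnit_iff_bijective.2 ⟨hG, LinearMap.injective_iff_surjective.1 hG⟩

variable {E E' F : Type*} [NormedAddCommGroup E] [InnerProductSpace ℝ E]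
  [NormedAddCommGroup E'] [InnerProductSpace ℝ E'] [NormedAddCommGroup F] [InnerProductSpace ℝ F]

/-- Completing the square: the minimum of `u ↦ a ⟪u, G u⟫ + ⟪u, b⟫` is attained at
`u = -(2a)⁻¹ G⁻¹ b`. -/
lemma IsPositive.neg_inner_inverse_le {G : F →L[ℝ] F} (hG : G.IsPositive) (hGu : IsUnit G)
    {a : ℝ} (ha : 0 < a) (u b : F) :
    -(4 * a)⁻¹ * ⟪b, Ring.inverse G b⟫_ℝ ≤ a * ⟪u, G u⟫_ℝ + ⟪u, b⟫_ℝ := by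
  set v := Ring.inverse G b
  have hv : G v = b := by
    simpa using congr($(Ring.mul_inverse_cancel G hGu) b)
  have hsq : ⟪G (u + (2 * a)⁻¹ • v), u + (2 * a)⁻¹ • v⟫_ℝ
      = ⟪G u, u⟫_ℝ + a⁻¹ * ⟪u, b⟫_ℝ + (4 * a ^ 2)⁻¹ * ⟪b, v⟫_ℝ := by
    simp only [map_add, map_smul, hv, inner_add_left, inner_add_right, real_inner_smul_left,
      real_inner_smul_right]
    rw [hG.inner_left_eq_inner_right u v, hv, real_inner_comm b u]
    field_simp
    ring
  have h := mul_nonneg ha.le (hG.re_inner_nonneg_left (u + (2 * a)⁻¹ • v))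
  rw [RCLike.re_to_real, hsq, real_inner_comm u (G u)] at h
  field_simp at h ⊢
  linarith

section Compression

variable [CompleteSpace E] [CompleteSpace F] {B : F →L[ℝ] E} {Q : E →L[ℝ] E}

lemma inner_adjoint_conj_apply (v : F) : ⟪v, (B† ∘L Q ∘L B) v⟫_ℝ = ⟪B v, Q (B v)⟫_ℝ := by
  rw [comp_apply, comp_apply, adjoint_inner_right]

lemma isPositive_adjoint_conj (hQ : IsSelfAdjoint Q)
    (hpos : ∀ v, B v ≠ 0 → 0 < ⟪B v, Q (B v)⟫_ℝ) : (B† ∘L Q ∘L B).IsPositive := by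
  refine isPositive_def'.2 ⟨hQ.adjoint_conj B, fun v => ?_⟩
  rw [reApplyInnerSelf, RCLike.re_to_real, real_inner_comm, inner_adjoint_conj_apply]
  by_cases hv : B v = 0
  · simp [hv]
  · exact (hpos v hv).le

lemma isUnit_adjoint_conj [FiniteDimensional ℝ F] (hB : Function.Injective B)
    (hpos : ∀ v, B v ≠ 0 → 0 < ⟪B v, Q (B v)⟫_ℝ) : IsUnit (B† ∘L Q ∘L B) := by
  refine isUnit_of_injective ((injective_iff_map_eq_zero _).2 fun v hv => ?_)
  by_contra hv0
  have := hpos v ((map_ne_zero_iff _ hB).2 hv0)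
  rw [← inner_adjoint_conj_apply, hv, inner_zero_right] at this
  exact this.false

variable [CompleteSpace E'] [FiniteDimensional ℝ F]

lemma mul_inner_schur_le (hQ : IsSelfAdjoint Q) (hB : Function.Injective B)
    (hpos : ∀ v, B v ≠ 0 → 0 < ⟪B v, Q (B v)⟫_ℝ) (P : E' →L[ℝ] E') (A : E' →L[ℝ] E)
    {a a' : ℝ} (ha : 0 < a) (ha' : 0 < a') (u : F) (z : E') :
    a' * ⟪z, (P - (1 / (4 * a * a')) •
      (A† ∘L B ∘L Ring.inverse (B† ∘L Q ∘L B) ∘L B† ∘L A)) z⟫_ℝ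
      ≤ a * ⟪B u, Q (B u)⟫_ℝ + ⟪B u, A z⟫_ℝ + a' * ⟪z, P z⟫_ℝ := by
  have hsq := (isPositive_adjoint_conj hQ hpos).neg_inner_inverse_le
    (isUnit_adjoint_conj hB hpos) ha u ((B†) (A z))
  rw [inner_adjoint_conj_apply, adjoint_inner_right] at hsq
  have hz : ⟪z, (A† ∘L B ∘L Ring.inverse (B† ∘L Q ∘L B) ∘L B† ∘L A) z⟫_ℝ
      = ⟪(B†) (A z), Ring.inverse (B† ∘L Q ∘L B) ((B†) (A z))⟫_ℝ := by
    simp only [comp_apply]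
    rw [adjoint_inner_right, ← adjoint_inner_left B]
  rw [sub_apply, smul_apply, inner_sub_right, real_inner_smul_right, hz]
  have hscale : a' * (1 / (4 * a * a')) = (4 * a)⁻¹ := by field_simp
  rw [mul_sub, ← mul_assoc, hscale]
  linarith

lemma pair_form_pos_of_schur (hQ : IsSelfAdjoint Q) (hB : Function.Injective B)
    (hpos : ∀ v, B v ≠ 0 → 0 < ⟪B v, Q (B v)⟫_ℝ) (P : E' →L[ℝ] E') (A : E' →L[ℝ] E)
    {a a' : ℝ} (ha : 0 < a) (ha' : 0 < a') (u : F) (z : E')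
    (hschur : z ≠ 0 → 0 < ⟪z, (P - (1 / (4 * a * a')) •
      (A† ∘L B ∘L Ring.inverse (B† ∘L Q ∘L B) ∘L B† ∘L A)) z⟫_ℝ) :
    0 ≤ a * ⟪B u, Q (B u)⟫_ℝ + ⟪B u, A z⟫_ℝ + a' * ⟪z, P z⟫_ℝ ∧
      (z ≠ 0 → 0 < a * ⟪B u, Q (B u)⟫_ℝ + ⟪B u, A z⟫_ℝ + a' * ⟪z, P z⟫_ℝ) := by
  have hle := mul_inner_schur_le hQ hB hpos P A ha ha' u z
  refine ⟨?_, fun hz => (mul_pos ha' (hschur hz)).trans_le hle⟩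
  by_cases hz : z = 0
  · simpa [hz] using hle
  · exact (mul_pos ha' (hschur hz)).le.trans hle

end Compression

end ContinuousLinearMap

theorem stmt15_general (N : ℕ) (n : Fin N → ℕ)
    (Q : ∀ k i : Fin N, EuclideanSpace ℝ (Fin (n i)) →L[ℝ] EuclideanSpace ℝ (Fin (n k)))
    (hQsymm : ∀ k, (Q k k).adjoint = Q k k)
    (M : ∀ k, Submodule ℝ (EuclideanSpace ℝ (Fin (n k))))
    (c : Fin N → ℕ)
    (B : ∀ k, EuclideanSpace ℝ (Fin (c k)) →L[ℝ] EuclideanSpace ℝ (Fin (n k)))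
    (hBinj : ∀ k, Function.Injective (B k))
    (hBrange : ∀ k, Set.range (B k) = (M k : Set (EuclideanSpace ℝ (Fin (n k)))))
    (hpos : ∀ k, ∀ y ∈ M k, y ≠ 0 → 0 < ⟪y, Q k k y⟫_ℝ)
    (α : Fin N → Fin N → ℝ)
    (hαpos : ∀ i j, i ≠ j → 0 < α i j)
    (hαsum : ∀ i, ∑ j ∈ Finset.univ.erase i, α i j = 1)
    (hcond : ∀ i k : Fin N, i ≠ k → ∀ y ∈ M k, y ≠ 0 →
      0 < ⟪y, (Q k k - (1 / (4 * α i k * α k i)) •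
        (((Q i k + (Q k i).adjoint).adjoint).comp ((B i).comp
          ((Ring.inverse (((B i).adjoint).comp ((Q i i).comp (B i)))).comp
            (((B i).adjoint).comp (Q i k + (Q k i).adjoint)))))) y⟫_ℝ) :
    ∀ y : ∀ k, EuclideanSpace ℝ (Fin (n k)), (∀ k, y k ∈ M k) → y ≠ 0 →
      0 < ∑ k, ∑ i, ⟪y k, Q k i (y i)⟫_ℝ := by
  intro y hyM hy0
  have hBpos : ∀ i v, B i v ≠ 0 → 0 < ⟪B i v, Q i i (B i v)⟫_ℝ := fun i v =>
    hpos i _ ((hBrange i).subset ⟨v, rfl⟩)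
  choose u hu using fun i => (hBrange i).symm.subset (hyM i)
  set e := fun k i => ⟪y k, Q k i (y i)⟫_ℝ
  have hpair : ∀ i k, i ≠ k → 0 ≤ α i k * e i i + (e i k + e k i) + α k i * e k k ∧
      (y k ≠ 0 → 0 < α i k * e i i + (e i k + e k i) + α k i * e k k) := by
    intro i k hik
    have hcross : ⟪y i, (Q i k + (Q k i)†) (y k)⟫_ℝ = e i k + e k i := by
      rw [add_apply, inner_add_right, adjoint_inner_right, real_inner_comm (y k)]
    have := pair_form_pos_of_schur (isSelfAdjoint_iff'.2 (hQsymm i)) (hBinj i) (hBpos i)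
      (Q k k) _ (hαpos i k hik) (hαpos k i hik.symm) (u i) (y k) (hcond i k hik (y k) (hyM k))
    rwa [hu, hcross] at this
  obtain ⟨k₀, hk₀⟩ : ∃ k, y k ≠ 0 := by
    by_contra! h
    exact hy0 (funext h)
  obtain ⟨i₀, hi₀, -⟩ := exists_ne_zero_of_sum_ne_zero ((hαsum k₀).trans_ne one_ne_zero)
  have hsum := sum_sum_erase_pos (fun i k hik => (hpair i k hik).1) (mem_erase.1 hi₀).1
    ((hpair i₀ k₀ (mem_erase.1 hi₀).1).2 hk₀)
  rw [sum_sum_erase_pair_eq e α hαsum] at hsum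
  linarith

/-- The key quadratic-form estimate from the proof of Theorem 3.2 (sufficient condition
for strong regularity of the KKT mapping of a Nash equilibrium problem): positive
definiteness of each diagonal block `Q_{kk}` on `M^k` together with condition (α)
implies that the full block quadratic form is positive definite on `M = M^1 × ⋯ × M^N`. -/
theorem stmt15 (N : ℕ) (hN : 1 ≤ N) (n : Fin N → ℕ)
    (Q : ∀ k i : Fin N, EuclideanSpace ℝ (Fin (n i)) →L[ℝ] EuclideanSpace ℝ (Fin (n k)))
    (hQsymm : ∀ k, (Q k k).adjoint = Q k k)
    (M : ∀ k, Submodule ℝ (EuclideanSpace ℝ (Fin (n k))))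
    (hM : ∀ k, M k ≠ ⊥)
    (c : Fin N → ℕ)
    (hc : ∀ k, c k = Module.finrank ℝ (M k))
    (B : ∀ k, EuclideanSpace ℝ (Fin (c k)) →L[ℝ] EuclideanSpace ℝ (Fin (n k)))
    (hBinj : ∀ k, Function.Injective (B k))
    (hBrange : ∀ k, Set.range (B k) = (M k : Set (EuclideanSpace ℝ (Fin (n k)))))
    (hpos : ∀ k, ∀ y ∈ M k, y ≠ 0 → 0 < ⟪y, Q k k y⟫_ℝ)
    (α : Fin N → Fin N → ℝ)
    (hαpos : ∀ i j, i ≠ j → 0 < α i j)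
    (hαsum : ∀ i, ∑ j ∈ Finset.univ.erase i, α i j = 1)
    (hcond : ∀ i k : Fin N, i ≠ k → ∀ y ∈ M k, y ≠ 0 →
      0 < ⟪y, (Q k k - (1 / (4 * α i k * α k i)) •
        (((Q i k + (Q k i).adjoint).adjoint).comp ((B i).comp
          ((Ring.inverse (((B i).adjoint).comp ((Q i i).comp (B i)))).comp
            (((B i).adjoint).comp (Q i k + (Q k i).adjoint)))))) y⟫_ℝ) :
    ∀ y : ∀ k, EuclideanSpace ℝ (Fin (n k)), (∀ k, y k ∈ M k) → y ≠ 0 →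
      0 < ∑ k, ∑ i, ⟪y k, Q k i (y i)⟫_ℝ :=
  stmt15_general N n Q hQsymm M c B hBinj hBrange hpos α hαpos hαsum hcond
end

section
/- Suppose the NEP satisfies the convex assumptions and (x̄,λ̄) ∈ S_KKT(p̄). If the NEP satisfies the P-property at (p̄,x̄,λ̄) on K(I_1,I_2), then the NEP satisfies the I-property at (p̄,x̄,λ̄) on K(I_1,I_2). -/
open Function Set
open scoped InnerProductSpace

noncomputable section

/-!
Under the convex assumptions each player's Lagrangian `L^k(·, x̄^{-k}, λ̄^k; w̄^k)` is convex
(the multipliers of the inequality constraints are nonnegative), so the diagonal Hessian blocks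
are positive semidefinite: `h_k := ⟪y^k, ∇²_{x^k x^k} L^k y^k⟫ ≥ 0`. If `0 ≠ y ∈ K(I_1, I_2)`
solved the equations of the I-property, the `k`-th equation would turn the `k`-th expression of
the P-property into `-h_k / 2 ≤ 0` for every `k`.
-/

open NEPStability

section ConvexAnalysis

theorem ConvexOn.finset_sum {𝕜 E β ι : Type*} [Semiring 𝕜] [PartialOrder 𝕜]
    [AddCommMonoid E] [AddCommMonoid β] [PartialOrder β] [IsOrderedAddMonoid β]
    [SMul 𝕜 E] [Module 𝕜 β] {s : Set E} (hs : Convex 𝕜 s) (t : Finset ι) {F : ι → E → β}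
    (hF : ∀ i ∈ t, ConvexOn 𝕜 s (F i)) : ConvexOn 𝕜 s fun x => ∑ i ∈ t, F i x := by
  classical
  induction t using Finset.induction_on with
  | empty => simpa using convexOn_const (0 : β) hs
  | insert a t hat ih =>
    simp only [Finset.sum_insert hat]
    exact (hF a (t.mem_insert_self a)).add (ih fun i hi => hF i (Finset.mem_insert_of_mem hi))

variable {E : Type*} [NormedAddCommGroup E] [InnerProductSpace ℝ E] [CompleteSpace E]

theorem ContDiff.gradient {φ : E → ℝ} {n : WithTop ℕ∞} (hφ : ContDiff ℝ (n + 1) φ) :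
    ContDiff ℝ n (gradient φ) :=
  (InnerProductSpace.toDual ℝ E).symm.contDiff.comp (hφ.fderiv_right le_rfl)

/-- Restricted to the line through `x` in direction `y`, `φ` has the monotone derivative
`t ↦ ⟪y, ∇φ (x + t • y)⟫`, whose derivative at `0` is the Hessian quadratic form. -/
theorem ConvexOn.inner_fderiv_gradient_self_nonneg {φ : E → ℝ} (hφ : ConvexOn ℝ univ φ)
    (hd : Differentiable ℝ φ) {x : E} (hx : DifferentiableAt ℝ (gradient φ) x) (y : E) :
    0 ≤ ⟪y, fderiv ℝ (gradient φ) x y⟫_ℝ := by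
  have hline : ∀ t : ℝ, HasDerivAt (fun t : ℝ => x + t • y) y t := fun t => by
    simpa using ((hasDerivAt_id t).smul_const y).const_add x
  have hline_convex : ConvexOn ℝ univ fun t : ℝ => φ (x + t • y) := by
    have hcomp : φ ∘ AffineMap.lineMap x (x + y) = fun t : ℝ => φ (x + t • y) := by
      funext t
      simp [AffineMap.lineMap_apply_module', add_comm]
    simpa [hcomp] using hφ.comp_affineMap (AffineMap.lineMap x (x + y))
  have hline_deriv : ∀ t : ℝ,
      HasDerivAt (fun t : ℝ => φ (x + t • y)) ⟪y, gradient φ (x + t • y)⟫_ℝ t := fun t => by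
    rw [real_inner_comm, inner_gradient_left]
    exact (hd _).hasFDerivAt.comp_hasDerivAt t (hline t)
  have hmono : Monotone fun t : ℝ => ⟪y, gradient φ (x + t • y)⟫_ℝ := by
    intro s t hst
    have := hline_convex.monotoneOn_deriv (fun t _ => (hline_deriv t).differentiableAt)
      (mem_univ s) (mem_univ t) hst
    rwa [(hline_deriv s).deriv, (hline_deriv t).deriv] at this
  have hhess : HasDerivAt (fun t : ℝ => ⟪y, gradient φ (x + t • y)⟫_ℝ)
      ⟪y, fderiv ℝ (gradient φ) x y⟫_ℝ 0 :=
    (innerSL ℝ y).hasFDerivAt.comp_hasDerivAt 0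
      (hx.hasFDerivAt.comp_hasDerivAt_of_eq 0 (hline 0) (by simp))
  exact hhess.deriv ▸ hmono.deriv_nonneg

end ConvexAnalysis

namespace NEPStability.NEPData

variable {N : ℕ} {n m d : Fin N → ℕ} (P : NEPData N n m d) (k : Fin N)
  (x : ∀ j, EuclideanSpace ℝ (Fin (n j))) (lk : EuclideanSpace ℝ (Fin (m k)))
  (wk : EuclideanSpace ℝ (Fin (d k)))

def lagrangian (z : EuclideanSpace ℝ (Fin (n k))) : ℝ :=
  P.f k (update x k z) wk + ∑ i, lk i * P.g k i z wk

theorem gradLag_update_self (z : EuclideanSpace ℝ (Fin (n k))) :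
    P.gradLag k (update x k z) lk wk = gradient (P.lagrangian k x lk wk) z := by
  simp only [gradLag, update_idem, update_self]
  rfl

theorem hessLag_self :
    P.hessLag k k x lk wk = fderiv ℝ (gradient (P.lagrangian k x lk wk)) (x k) := by
  simp only [hessLag, gradLag_update_self]

variable {P}

theorem IsC2Data.contDiff_lagrangian (hC2 : P.IsC2Data) :
    ContDiff ℝ 2 (P.lagrangian k x lk wk) :=
  ((hC2.1 k).comp ((contDiff_update 2 x k).prodMk contDiff_const)).add <|
    ContDiff.sum fun i _ =>
      contDiff_const.mul ((hC2.2 k i).comp (contDiff_id.prodMk contDiff_const))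

/-- Equality constraints are affine, so their terms are convex whatever the sign of the
multiplier. -/
theorem ConvexAssumptions.convexOn_lagrangian (hconv : P.ConvexAssumptions)
    (hlk : ∀ i : Fin (m k), P.s k ≤ (i : ℕ) → 0 ≤ lk i) :
    ConvexOn ℝ univ (P.lagrangian k x lk wk) := by
  refine (hconv.1 k x wk).add (ConvexOn.finset_sum convex_univ _ fun i _ => ?_)
  by_cases hi : (i : ℕ) < P.s k
  · obtain ⟨l, c, hg⟩ := hconv.2.1 k i hi wk
    simp only [hg, mul_add]
    exact ((lk i • l).toLinearMap.convexOn convex_univ).add_const _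
  · simpa only [smul_eq_mul] using (hconv.2.2 k i (not_lt.1 hi) wk).smul (hlk i (not_lt.1 hi))

theorem inner_hessLag_self_nonneg (hC2 : P.IsC2Data) (hconv : P.ConvexAssumptions)
    (hlk : ∀ i : Fin (m k), P.s k ≤ (i : ℕ) → 0 ≤ lk i) (y : EuclideanSpace ℝ (Fin (n k))) :
    0 ≤ ⟪y, P.hessLag k k x lk wk y⟫_ℝ := by
  have hL := hC2.contDiff_lagrangian k x lk wk
  rw [hessLag_self]
  exact (hconv.convexOn_lagrangian k x lk wk hlk).inner_fderiv_gradient_self_nonneg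
    (hL.differentiable two_ne_zero)
    ((ContDiff.gradient (n := 1) hL).differentiable one_ne_zero _) y

end NEPStability.NEPData

/-- Remark 5.1 i): under the convex assumptions, the P-property implies the I-property. -/
theorem stmt16 {N : ℕ} {n m d : Fin N → ℕ} (P : NEPData N n m d)
    (hC2 : P.IsC2Data)
    (pb : (∀ k, EuclideanSpace ℝ (Fin (m k))) × (∀ j, EuclideanSpace ℝ (Fin (n j)))
      × (∀ k, EuclideanSpace ℝ (Fin (d k))))
    (xb : ∀ j, EuclideanSpace ℝ (Fin (n j))) (lb : ∀ k, EuclideanSpace ℝ (Fin (m k)))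
    (hsol : (xb, lb) ∈ P.SKKT pb)
    (hconv : P.ConvexAssumptions)
    (hP : P.PProperty pb xb lb) :
    P.IProperty pb xb lb := by
  intro y hy hstationary
  by_contra hy0
  obtain ⟨k, hk⟩ := hP y hy hy0
  have hself : 0 ≤ ⟪y k, P.hessLag k k xb (lb k) (pb.2.2 k) (y k)⟫_ℝ :=
    NEPData.inner_hessLag_self_nonneg k xb (lb k) (pb.2.2 k) hC2 hconv
      (fun i hi => ((hsol k).2.2 i hi).1) (y k)
  have hk_stationary := hstationary k
  rw [← Finset.sum_erase_add _ _ (Finset.mem_univ k)] at hk_stationary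
  linarith
end
end
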